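/- Let F be a field of characteristic p > 2, n ≥ 1, and λ a partition of n with exactly 2 parts. Then the exterior square Λ²M^λ of the Young permutation module has no nonzero S_n-fixed vectors, i.e., Hom_{FS_n}(F, Λ²M^λ) = 0. -/

import Mathlib

open ExteriorAlgebra TensorProduct

section Aux

variable (F : Type*) [Field F] (M : Type*) [AddCommGroup M] [Module F M]

/-- The alternating map `(a,b) ↦ a ⊗ b - b ⊗ a`. -/
noncomputable def altTensor : M [⋀^Fin 2]→ₗ[F] M ⊗[F] M where
  toFun v := v 0 ⊗ₜ[F] v 1 - v 1 ⊗ₜ[F] v 0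
  map_update_add' := by
    intro _ m i x y
    fin_cases i <;>
      simp [Function.update_apply, add_tmul, tmul_add] <;> abel
  map_update_smul' := by
    intro _ m i c x
    fin_cases i <;>
      simp [Function.update_apply, smul_tmul', tmul_smul, smul_sub]
  map_eq_zero_of_eq' := by
    intro v i j hv hij
    fin_cases i <;> fin_cases j <;> simp_all

/-- Lift to the exterior algebra, zero in degrees other than 2. -/
noncomputable def psi : ExteriorAlgebra F M →ₗ[F] M ⊗[F] M :=
  ExteriorAlgebra.liftAlternating
    (fun i => match i with | 2 => altTensor F M | _ => 0)

@[simp] lemma psi_ιMulti (v : Fin 2 → M) :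
    psi F M (ιMulti F 2 v) = v 0 ⊗ₜ[F] v 1 - v 1 ⊗ₜ[F] v 0 := by
  rw [psi, ExteriorAlgebra.liftAlternating_apply_ιMulti]
  rfl

/-- Multiplication map `M ⊗ M → ExteriorAlgebra`. -/
noncomputable def mu : M ⊗[F] M →ₗ[F] ExteriorAlgebra F M :=
  TensorProduct.lift (LinearMap.mk₂ F (fun a b => ι F a * ι F b)
    (by intro a b c; simp [map_add, add_mul])
    (by intro c a b; simp [map_smul, smul_mul_assoc])
    (by intro a b c; simp [map_add, mul_add])
    (by intro c a b; simp [map_smul, mul_smul_comm]))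

@[simp] lemma mu_tmul (a b : M) : mu F M (a ⊗ₜ[F] b) = ι F a * ι F b := rfl

lemma ιMulti_two (v : Fin 2 → M) : ιMulti F 2 v = ι F (v 0) * ι F (v 1) := by
  simp [ιMulti_apply, List.ofFn_succ, Matrix.vecTail]

lemma mu_psi (x : ExteriorAlgebra F M) (hx : x ∈ ⋀[F]^2 M) :
    mu F M (psi F M x) = (2 : F) • x := by
  rw [← ιMulti_span_fixedDegree] at hx
  induction hx using Submodule.span_induction with
  | mem x h =>
    obtain ⟨v, rfl⟩ := h
    rw [psi_ιMulti]
    have h2 : ι F (v 1) * ι F (v 0) = - (ι F (v 0) * ι F (v 1)) :=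
      eq_neg_of_add_eq_zero_left (ι_add_mul_swap (R := F) (v 1) (v 0))
    rw [map_sub, mu_tmul, mu_tmul, h2, sub_neg_eq_add, ιMulti_two, two_smul]
  | zero => simp
  | add x y _ _ hx hy => rw [map_add, map_add, hx, hy, smul_add]
  | smul c x _ hx => rw [map_smul, map_smul, hx, smul_comm]

end Aux
/-- A `λ`-tabloid: a function `f : {1,…,n} → {rows}` whose fibre over the row `i` has
cardinality `λ_i`. -/
def Tabloid (n ℓ : ℕ) (lam : Fin ℓ → ℕ) : Type :=
  {f : Fin n → Fin ℓ // ∀ i, (Finset.univ.filter (fun x => f x = i)).card = lam i}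

/-- The symmetric group `S_n` acts on `λ`-tabloids by permuting entries. -/
noncomputable instance tabloidAction (n ℓ : ℕ) (lam : Fin ℓ → ℕ) :
    MulAction (Equiv.Perm (Fin n)) (Tabloid n ℓ lam) where
  smul g t := ⟨fun x => t.1 (g⁻¹ x), fun i => by
    rw [← t.2 i]
    refine Finset.card_bij' (fun x _ => g⁻¹ x) (fun x _ => g x) ?_ ?_ ?_ ?_ <;> simp⟩
  one_smul t := Subtype.ext <| funext fun x => congrArg t.1 (by simp)
  mul_smul g h t := Subtype.ext <| funext fun x => congrArg t.1 (by simp [mul_inv_rev, Equiv.Perm.mul_apply])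

/-- The representation of `G` on the exterior algebra of `M` induced by a
representation of `G` on `M`; it restricts to the diagonal action on each `⋀[F]^a M`. -/
noncomputable def extAlgRep {F G M : Type*} [Field F] [Group G] [AddCommGroup M] [Module F M]
    (ρ : Representation F G M) : Representation F G (ExteriorAlgebra F M) where
  toFun g := (ExteriorAlgebra.map (ρ g)).toLinearMap
  map_one' := by
    show (ExteriorAlgebra.map (ρ 1)).toLinearMap = _
    have h1 : ρ 1 = LinearMap.id := by rw [map_one]; rfl
    rw [h1, ExteriorAlgebra.map_id]; rfl
  map_mul' g h := by
    show (ExteriorAlgebra.map (ρ (g * h))).toLinearMap = _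
    have h1 : ρ (g * h) = (ρ g) ∘ₗ (ρ h) := by rw [map_mul]; rfl
    rw [h1, ← ExteriorAlgebra.map_comp_map]; rfl

/-- The permutation representation on `H →₀ k` (the old `Representation.ofMulAction`). -/
noncomputable def ofMulActionFinsupp (k G H : Type*) [CommSemiring k] [Monoid G] [MulAction G H] :
    Representation k G (H →₀ k) where
  toFun g := Finsupp.lmapDomain k k (g • ·)
  map_one' := by ext x y; simp
  map_mul' x y := by ext z w; simp [mul_smul]

lemma ofMulActionFinsupp_apply' (k G H : Type*) [CommSemiring k] [Group G] [MulAction G H]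
    (g : G) (f : H →₀ k) (h : H) : ofMulActionFinsupp k G H g f h = f (g⁻¹ • h) := by
  show Finsupp.mapDomain (g • ·) f h = _
  have := Finsupp.mapDomain_apply (MulAction.injective g) f (g⁻¹ • h)
  simp only [smul_inv_smul] at this
  exact this


lemma fin2_resolve : ∀ a b : Fin 2, ¬(a = 0 ∧ b = 1) → ¬(a = 1 ∧ b = 0) → a = b := by decide

lemma fin2_ne_zero : ∀ a : Fin 2, ¬ a = 0 ↔ a = 1 := by decide

/-- For a two-part shape, any two tabloids can be swapped by some permutation. -/
lemma exists_swap_perm (n : ℕ) (lam : Fin 2 → ℕ) (s t : Tabloid n 2 lam) :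
    ∃ g : Equiv.Perm (Fin n), g⁻¹ • s = t ∧ g⁻¹ • t = s := by
  classical
  set S1 : Finset (Fin n) := Finset.univ.filter (fun x => s.1 x = 0 ∧ t.1 x = 1) with hS1
  set S2 : Finset (Fin n) := Finset.univ.filter (fun x => s.1 x = 1 ∧ t.1 x = 0) with hS2
  have key : ∀ (u v : Tabloid n 2 lam),
      (Finset.univ.filter (fun x => u.1 x = 0 ∧ v.1 x = 0)).card
        + (Finset.univ.filter (fun x => u.1 x = 0 ∧ v.1 x = 1)).card = lam 0 := by
    intro u v
    rw [← u.2 0]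
    rw [← Finset.card_filter_add_card_filter_not
      (s := Finset.univ.filter (fun x => u.1 x = 0)) (p := fun x => v.1 x = 0)]
    congr 1
    · rw [Finset.filter_filter]
    · rw [Finset.filter_filter]
      exact congrArg Finset.card (Finset.filter_congr (fun x _ => by rw [fin2_ne_zero]))
  have hswap : ∀ (u v : Tabloid n 2 lam),
      (Finset.univ.filter (fun x => u.1 x = 0 ∧ v.1 x = 0))
        = (Finset.univ.filter (fun x => v.1 x = 0 ∧ u.1 x = 0)) :=
    fun u v => Finset.filter_congr (fun x _ => and_comm)
  have hcard : S1.card = S2.card := by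
    have h1 := key s t
    have h2 := key t s
    rw [hswap t s] at h2
    rw [← hS1] at h1
    have hS2' : S2 = Finset.univ.filter (fun x => t.1 x = 0 ∧ s.1 x = 1) := by
      rw [hS2]; exact Finset.filter_congr (fun x _ => and_comm)
    rw [hS2']
    omega
  have e : {y // y ∈ S1} ≃ {y // y ∈ S2} := Finset.equivOfCardEq hcard
  set f : Fin n → Fin n := fun x =>
    if h : x ∈ S1 then (e ⟨x, h⟩ : Fin n)
    else if h : x ∈ S2 then (e.symm ⟨x, h⟩ : Fin n) else x with hf
  have hdisj : ∀ x, x ∈ S1 → x ∈ S2 → False := by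
    intro x h1 h2
    rw [hS1, Finset.mem_filter] at h1
    rw [hS2, Finset.mem_filter] at h2
    rw [h1.2.1] at h2
    exact absurd h2.2.1 (by decide)
  have hfS1 : ∀ x (h : x ∈ S1), f x = (e ⟨x, h⟩ : Fin n) := by
    intro x h; rw [hf]; simp [h]
  have hfS2 : ∀ x (h : x ∈ S2), f x = (e.symm ⟨x, h⟩ : Fin n) := by
    intro x h
    have h1 : x ∉ S1 := fun h1 => hdisj x h1 h
    rw [hf]; simp [h, h1]
  have hfout : ∀ x, x ∉ S1 → x ∉ S2 → f x = x := by
    intro x h1 h2; rw [hf]; simp [h1, h2]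
  have hinv : Function.Involutive f := by
    intro x
    by_cases h1 : x ∈ S1
    · have h2 : (e ⟨x, h1⟩ : Fin n) ∈ S2 := (e ⟨x, h1⟩).2
      rw [hfS1 x h1, hfS2 _ h2]
      have : (⟨(e ⟨x, h1⟩ : Fin n), h2⟩ : {y // y ∈ S2}) = e ⟨x, h1⟩ := Subtype.ext rfl
      rw [this, Equiv.symm_apply_apply]
    · by_cases h2 : x ∈ S2
      · have h3 : (e.symm ⟨x, h2⟩ : Fin n) ∈ S1 := (e.symm ⟨x, h2⟩).2
        rw [hfS2 x h2, hfS1 _ h3]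
        have : (⟨(e.symm ⟨x, h2⟩ : Fin n), h3⟩ : {y // y ∈ S1}) = e.symm ⟨x, h2⟩ :=
          Subtype.ext rfl
        rw [this, Equiv.apply_symm_apply]
      · rw [hfout x h1 h2, hfout x h1 h2]
  have hmemS1 : ∀ x, x ∈ S1 ↔ (s.1 x = 0 ∧ t.1 x = 1) := by
    intro x; rw [hS1, Finset.mem_filter]; simp
  have hmemS2 : ∀ x, x ∈ S2 ↔ (s.1 x = 1 ∧ t.1 x = 0) := by
    intro x; rw [hS2, Finset.mem_filter]; simp
  have hfs : ∀ x, s.1 (f x) = t.1 x ∧ t.1 (f x) = s.1 x := by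
    intro x
    by_cases h1 : x ∈ S1
    · have h2 : (e ⟨x, h1⟩ : Fin n) ∈ S2 := (e ⟨x, h1⟩).2
      rw [hfS1 x h1]
      rw [hmemS2] at h2
      rw [hmemS1] at h1
      exact ⟨h2.1.trans h1.2.symm, h2.2.trans h1.1.symm⟩
    · by_cases h2 : x ∈ S2
      · have h3 : (e.symm ⟨x, h2⟩ : Fin n) ∈ S1 := (e.symm ⟨x, h2⟩).2
        rw [hfS2 x h2]
        rw [hmemS1] at h3
        rw [hmemS2] at h2
        exact ⟨h3.1.trans h2.2.symm, h3.2.trans h2.1.symm⟩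
      · rw [hfout x h1 h2]
        have := fin2_resolve (s.1 x) (t.1 x)
          (fun h => h1 ((hmemS1 x).2 h)) (fun h => h2 ((hmemS2 x).2 h))
        exact ⟨this, this.symm⟩
  refine ⟨Equiv.mk f f hinv.leftInverse hinv.rightInverse, ?_, ?_⟩
  · exact Subtype.ext (funext fun x => by
      show s.1 _ = t.1 x
      exact (hfs x).1)
  · exact Subtype.ext (funext fun x => by
      show t.1 _ = s.1 x
      exact (hfs x).2)
set_option maxHeartbeats 1000000 in
/-- Let `F` be a field of characteristic `p > 2` and `λ` a partition of
`n` with exactly two parts.  Then the exterior square `Λ²M^λ` of the Young permutation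
module has no nonzero `S_n`-fixed vectors. -/
theorem statement14 {p : ℕ} [Fact p.Prime] (hp2 : 2 < p) {F : Type*} [Field F] [CharP F p]
    (n : ℕ) (lam : Fin 2 → ℕ)
    (hpart : ∀ i j : Fin 2, i ≤ j → lam j ≤ lam i) (hpos : ∀ i, 0 < lam i)
    (hsum : ∑ i, lam i = n) :
    ∀ x ∈ ⋀[F]^2 (Tabloid n 2 lam →₀ F),
      (∀ g : Equiv.Perm (Fin n),
        extAlgRep (ofMulActionFinsupp F (Equiv.Perm (Fin n)) (Tabloid n 2 lam)) g x = x) →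
      x = 0 := by
  intro x hx hfix
  classical
  letI : Zero ((Tabloid n 2 lam →₀ F) ⊗[F] (Tabloid n 2 lam →₀ F)) :=
    (inferInstance : (AddCommMonoid ((Tabloid n 2 lam →₀ F) ⊗[F] (Tabloid n 2 lam →₀ F)))).toZero
  set Φ : ExteriorAlgebra F (Tabloid n 2 lam →₀ F) →ₗ[F] (Tabloid n 2 lam × Tabloid n 2 lam →₀ F) :=
    (finsuppTensorFinsupp' F (Tabloid n 2 lam) (Tabloid n 2 lam)).toLinearMap ∘ₗ
      psi F (Tabloid n 2 lam →₀ F) with hΦdef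
  clear_value Φ
  have hΦwedge : ∀ (v : Fin 2 → (Tabloid n 2 lam →₀ F)) (a b : Tabloid n 2 lam),
      Φ (ιMulti F 2 v) (a, b) = v 0 a * v 1 b - v 1 a * v 0 b := by
    intro v a b
    rw [hΦdef, LinearMap.comp_apply, psi_ιMulti, map_sub,
      Finsupp.sub_apply, LinearEquiv.coe_coe,
      finsuppTensorFinsupp'_apply_apply, finsuppTensorFinsupp'_apply_apply]

  have hx' : x ∈ Submodule.span F (Set.range (ιMulti F 2 (M := Tabloid n 2 lam →₀ F))) := by
    rwa [ιMulti_span_fixedDegree]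
  have hanti : ∀ y ∈ Submodule.span F (Set.range (ιMulti F 2 (M := Tabloid n 2 lam →₀ F))),
      ∀ a b : Tabloid n 2 lam, Φ y (a, b) = - Φ y (b, a) := by
    intro y hy
    induction hy using Submodule.span_induction with
    | mem y h =>
      obtain ⟨v, rfl⟩ := h
      intro a b
      rw [hΦwedge, hΦwedge]; ring
    | zero => intro a b; simp
    | add u w _ _ hu hw =>
      intro a b
      rw [map_add, Finsupp.add_apply, Finsupp.add_apply, hu, hw, neg_add]
    | smul c u _ hu =>
      intro a b
      rw [map_smul, Finsupp.smul_apply, Finsupp.smul_apply, hu, smul_neg]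
  have hequiv : ∀ (g : Equiv.Perm (Fin n)),
      ∀ y ∈ Submodule.span F (Set.range (ιMulti F 2 (M := Tabloid n 2 lam →₀ F))),
      ∀ a b : Tabloid n 2 lam,
      Φ (extAlgRep (ofMulActionFinsupp F (Equiv.Perm (Fin n)) (Tabloid n 2 lam)) g y) (a, b)
        = Φ y (g⁻¹ • a, g⁻¹ • b) := by
    intro g y hy
    induction hy using Submodule.span_induction with
    | mem y h =>
      obtain ⟨v, rfl⟩ := h
      intro a b
      have h1 : extAlgRep (ofMulActionFinsupp F (Equiv.Perm (Fin n)) (Tabloid n 2 lam)) g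
            (ιMulti F 2 v)
          = ιMulti F 2 (fun i =>
              ofMulActionFinsupp F (Equiv.Perm (Fin n)) (Tabloid n 2 lam) g (v i)) := by
        show ExteriorAlgebra.map
          (ofMulActionFinsupp F (Equiv.Perm (Fin n)) (Tabloid n 2 lam) g)
          (ιMulti F 2 v) = _
        rw [map_apply_ιMulti]; rfl
      rw [h1, hΦwedge, hΦwedge]
      simp only [ofMulActionFinsupp_apply']
    | zero => intro a b; simp
    | add u w _ _ hu hw =>
      intro a b
      simp only [map_add, Finsupp.add_apply, hu, hw]
    | smul c u _ hu =>
      intro a b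
      simp only [map_smul, Finsupp.smul_apply, hu]
  have htwo : (2 : F) ≠ 0 := by
    intro h
    rw [show (2 : F) = ((2 : ℕ) : F) by norm_num, CharP.cast_eq_zero_iff F p 2] at h
    have := Nat.le_of_dvd (by norm_num) h
    omega
  have hc : ∀ a b : Tabloid n 2 lam, Φ x (a, b) = 0 := by
    intro a b
    have ha : Φ x (a, b) = - Φ x (a, b) := by
      obtain ⟨g, hg1, hg2⟩ := exists_swap_perm n lam a b
      calc Φ x (a, b)
          = Φ (extAlgRep (ofMulActionFinsupp F (Equiv.Perm (Fin n)) (Tabloid n 2 lam)) g x)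
            (a, b) := by rw [hfix g]
        _ = Φ x (g⁻¹ • a, g⁻¹ • b) := hequiv g x hx' a b
        _ = Φ x (b, a) := by rw [hg1, hg2]
        _ = - Φ x (a, b) := hanti x hx' b a
    have h2 : (2 : F) * Φ x (a, b) = 0 := by linear_combination ha
    exact (mul_eq_zero.mp h2).resolve_left htwo
  have h0 : (finsuppTensorFinsupp' F (Tabloid n 2 lam) (Tabloid n 2 lam))
      (psi F (Tabloid n 2 lam →₀ F) x) = 0 := by
    ext ab
    obtain ⟨a, b⟩ := ab
    have h1 := hc a b
    rw [hΦdef] at h1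
    simp only [LinearMap.comp_apply, LinearEquiv.coe_toLinearMap] at h1
    simpa using h1
  have hψ : psi F (Tabloid n 2 lam →₀ F) x
      = (0 : TensorProduct F (Tabloid n 2 lam →₀ F) (Tabloid n 2 lam →₀ F)) := by
    have h2 := congrArg (finsuppTensorFinsupp' F (Tabloid n 2 lam) (Tabloid n 2 lam)).symm h0
    rw [LinearEquiv.symm_apply_apply,
      (finsuppTensorFinsupp' F (Tabloid n 2 lam) (Tabloid n 2 lam)).symm.map_zero] at h2
    exact h2
  have h2x : (2 : F) • x = 0 := by
    rw [← mu_psi F (Tabloid n 2 lam →₀ F) x hx, hψ, map_zero]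
  rcases smul_eq_zero.mp h2x with h | h
  · exact absurd h htwo
  · exact h
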